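/- Let T be a bounded operator on a Hilbert space H such that T^k is an m-isometry on the range of T^k, and x₀ ∈ H. With β_ℓ(S,x) := (1/ℓ!) ∑_{j=0}^ℓ (-1)^{ℓ-j} C(ℓ,j)‖S^j x‖² and the norm ‖|p‖|²_k = ∑ₙ|pₙ|² + ∑_{n≥0}‖(L^{nk}p)(T)x₀‖² on polynomials, the multiplication operator M_z^k satisfies β_{ℓ+1}(M_z^k, p) = (1/(ℓ+1)) β_ℓ(T^k, T^k p(T)x₀) for all polynomials p and all ℓ ≥ 1; consequently β_{m+1}(M_z^k, p) = 0 for all p, i.e., M_z^k extends to an (m+1)-isometry. -/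

import Mathlib

open scoped BigOperators
open Polynomial Finset fwdDiff

/-- The squared norm `‖|p‖|²_k = ∑ₙ |pₙ|² + ∑_{n≥0} ‖(L^{nk} p)(T) x₀‖²`, where
`L` is the coefficient backward shift (i.e. `Polynomial.divX`). -/
noncomputable def polyNormSq {H : Type*} [NormedAddCommGroup H] [InnerProductSpace ℂ H]
    [CompleteSpace H] (k : ℕ) (T : H →L[ℂ] H) (x₀ : H) (p : Polynomial ℂ) : ℝ :=
  (∑' n : ℕ, ‖p.coeff n‖ ^ 2) +
    ∑' n : ℕ, ‖(Polynomial.aeval T (Polynomial.divX^[n * k] p)) x₀‖ ^ 2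

/-- The defect functional `β_ℓ(S, x) = (1/ℓ!) ∑_{j=0}^ℓ (-1)^{ℓ-j} C(ℓ,j) ‖S^j x‖²`. -/
noncomputable def beta {H : Type*} [NormedAddCommGroup H] [InnerProductSpace ℂ H]
    (l : ℕ) (S : H →L[ℂ] H) (x : H) : ℝ :=
  ((l.factorial : ℝ))⁻¹ * ∑ j ∈ Finset.range (l + 1),
    (-1 : ℝ) ^ (l - j) * (l.choose j) * ‖(S ^ j) x‖ ^ 2

/-- The defect functional of `M_z^k` on polynomials with the norm `‖|·‖|_k`:
`β_ℓ(M_z^k, p) = (1/ℓ!) ∑_{j=0}^ℓ (-1)^{ℓ-j} C(ℓ,j) ‖|(M_z^k)^j p‖|²_k`, where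
`(M_z^k)^j p = z^{kj} p`. -/
noncomputable def betaM {H : Type*} [NormedAddCommGroup H] [InnerProductSpace ℂ H]
    [CompleteSpace H] (l k : ℕ) (T : H →L[ℂ] H) (x₀ : H) (p : Polynomial ℂ) : ℝ :=
  ((l.factorial : ℝ))⁻¹ * ∑ j ∈ Finset.range (l + 1),
    (-1 : ℝ) ^ (l - j) * (l.choose j) * polyNormSq k T x₀ (Polynomial.X ^ (k * j) * p)

/-!
Multiplying by `z^k` adds exactly one orbit term to `‖|·‖|²_k`: the coefficient part is
shift invariant and `L^{nk}(z^k q) = L^{(n-1)k} q` for `n ≥ 1`, so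
`‖|z^k q‖|²_k = ‖|q‖|²_k + ‖T^k q(T) x₀‖²`. Hence the first forward difference of
`j ↦ ‖|z^{kj} p‖|²_k` is `j ↦ ‖(T^k)^j (T^k p(T) x₀)‖²`. Since `ℓ! β_ℓ` is the `ℓ`-th forward
difference at `0` of `j ↦ ‖S^j x‖²`, this gives `β_{ℓ+1}(M_z^k, p) = β_ℓ(T^k, T^k p(T) x₀)/(ℓ+1)`,
and the `m`-isometry hypothesis on the range of `T^k` makes the right side vanish for `ℓ = m`.
-/

namespace Polynomial

variable {R : Type*} [Semiring R]

theorem coeff_divX_iterate (q : R[X]) (r n : ℕ) : (divX^[r] q).coeff n = q.coeff (n + r) := by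
  induction r generalizing q with
  | zero => rfl
  | succ r ih => rw [Function.iterate_succ_apply, ih, coeff_divX, add_assoc, add_comm r]

theorem divX_iterate_X_pow_mul (r : ℕ) (q : R[X]) : divX^[r] (X ^ r * q) = q := by
  ext n
  rw [coeff_divX_iterate, coeff_X_pow_mul]

theorem divX_iterate_eq_zero_of_natDegree_lt {q : R[X]} {r : ℕ} (h : q.natDegree < r) :
    divX^[r] q = 0 := by
  ext n
  rw [coeff_divX_iterate, coeff_zero]
  exact coeff_eq_zero_of_natDegree_lt (by omega)

theorem tsum_coeff_X_pow_mul {M : Type*} [AddCommMonoid M] [TopologicalSpace M] {f : R → M}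
    (hf : f 0 = 0) (s : ℕ) (q : R[X]) :
    ∑' n, f ((X ^ s * q).coeff n) = ∑' n, f (q.coeff n) := by
  rw [← (add_left_injective s).tsum_eq]
  · simp only [coeff_X_pow_mul]
  · intro n hn
    by_contra hns
    rw [Function.mem_support, coeff_X_pow_mul',
      if_neg fun h => hns ⟨n - s, Nat.sub_add_cancel h⟩, hf] at hn
    exact hn rfl

theorem summable_comp_divX_iterate_mul {M : Type*} [AddCommMonoid M] [TopologicalSpace M]
    {f : R[X] → M} (hf : f 0 = 0) {k : ℕ} (hk : 0 < k) (q : R[X]) :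
    Summable fun n => f (divX^[n * k] q) := by
  refine summable_of_ne_finset_zero (s := range (q.natDegree + 1)) fun n hn => ?_
  rw [mem_range, not_lt] at hn
  rw [divX_iterate_eq_zero_of_natDegree_lt (by nlinarith), hf]

end Polynomial

theorem aeval_X_pow_mul_apply {𝕜 E : Type*} [NontriviallyNormedField 𝕜] [NormedAddCommGroup E]
    [NormedSpace 𝕜 E] (T : E →L[𝕜] E) (p : 𝕜[X]) (s : ℕ) (x : E) :
    aeval T (X ^ s * p) x = (T ^ s) (aeval T p x) := by
  rw [map_mul, aeval_X_pow]
  rfl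

theorem sum_range_choose_mul_eq_fwdDiff_iterate {R : Type*} [CommRing R] (g : ℕ → R) (n : ℕ) :
    ∑ j ∈ range (n + 1), (-1 : R) ^ (n - j) * n.choose j * g j = (Δ_[(1 : ℕ)])^[n] g 0 := by
  rw [fwdDiff_iter_eq_sum_shift]
  refine sum_congr rfl fun j _ => ?_
  simp only [zsmul_eq_mul, smul_eq_mul, mul_one, zero_add]
  push_cast
  ring

section PolyNorm

variable {H : Type*} [NormedAddCommGroup H] [InnerProductSpace ℂ H] [CompleteSpace H]
  {k : ℕ} (T : H →L[ℂ] H) (x₀ : H)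

theorem polyNormSq_X_pow_mul (hk : 0 < k) (q : ℂ[X]) :
    polyNormSq k T x₀ (X ^ k * q) = polyNormSq k T x₀ q + ‖(T ^ k) (aeval T q x₀)‖ ^ 2 := by
  have hshift : ∀ n, divX^[(n + 1) * k] (X ^ k * q) = divX^[n * k] q := fun n => by
    rw [add_one_mul, Function.iterate_add_apply, divX_iterate_X_pow_mul]
  have hsum := summable_comp_divX_iterate_mul (f := fun q : ℂ[X] => ‖aeval T q x₀‖ ^ 2)
    (by simp) hk q
  unfold polyNormSq
  rw [tsum_coeff_X_pow_mul (f := fun a : ℂ => ‖a‖ ^ 2) (by simp),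
    tsum_eq_zero_add' (f := fun n => ‖aeval T (divX^[n * k] (X ^ k * q)) x₀‖ ^ 2)
      (by simpa only [hshift] using hsum)]
  simp only [hshift, zero_mul, Function.iterate_zero, id, aeval_X_pow_mul_apply]
  ring

theorem fwdDiff_polyNormSq_X_pow_mul (hk : 0 < k) (p : ℂ[X]) :
    Δ_[(1 : ℕ)] (fun j => polyNormSq k T x₀ (X ^ (k * j) * p)) =
      fun j => ‖((T ^ k) ^ j) ((T ^ k) (aeval T p x₀))‖ ^ 2 := by
  funext j
  have hmul : X ^ (k * (j + 1)) * p = X ^ k * (X ^ (k * j) * p) := by ring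
  rw [fwdDiff, hmul, polyNormSq_X_pow_mul T x₀ hk, aeval_X_pow_mul_apply, add_sub_cancel_left]
  congr 2
  show (T ^ k * T ^ (k * j)) _ = ((T ^ k) ^ j * T ^ k) _
  rw [← pow_mul, ← pow_add, ← pow_add, add_comm]

theorem betaM_succ (hk : 0 < k) (p : ℂ[X]) (l : ℕ) :
    betaM (l + 1) k T x₀ p = ((l : ℝ) + 1)⁻¹ * beta l (T ^ k) ((T ^ k) (aeval T p x₀)) := by
  rw [betaM, beta,
    sum_range_choose_mul_eq_fwdDiff_iterate (fun j => polyNormSq k T x₀ (X ^ (k * j) * p)),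
    sum_range_choose_mul_eq_fwdDiff_iterate (fun j => ‖((T ^ k) ^ j) ((T ^ k) (aeval T p x₀))‖ ^ 2),
    Function.iterate_succ_apply, fwdDiff_polyNormSq_X_pow_mul T x₀ hk, Nat.factorial_succ]
  push_cast
  rw [mul_inv]
  ring

end PolyNorm

theorem stmt19_general {H : Type*} [NormedAddCommGroup H] [InnerProductSpace ℂ H] [CompleteSpace H]
    (m k : ℕ) (hk : 1 ≤ k) (T : H →L[ℂ] H) (x₀ : H)
    (hT : ∀ y ∈ Set.range (⇑(T ^ k)), beta m (T ^ k) y = 0) :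
    (∀ (p : Polynomial ℂ) (l : ℕ), 1 ≤ l →
      betaM (l + 1) k T x₀ p =
        ((l : ℝ) + 1)⁻¹ * beta l (T ^ k) ((T ^ k) ((Polynomial.aeval T p) x₀))) ∧
    (∀ p : Polynomial ℂ, betaM (m + 1) k T x₀ p = 0) := by
  refine ⟨fun p l _ => betaM_succ T x₀ hk p l, fun p => ?_⟩
  rw [betaM_succ T x₀ hk, hT _ ⟨_, rfl⟩, mul_zero]

theorem stmt19 {H : Type*} [NormedAddCommGroup H] [InnerProductSpace ℂ H] [CompleteSpace H]
    (m k : ℕ) (hm : 1 ≤ m) (hk : 1 ≤ k) (T : H →L[ℂ] H) (x₀ : H)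
    (hT : ∀ y ∈ Set.range (⇑(T ^ k)), beta m (T ^ k) y = 0) :
    (∀ (p : Polynomial ℂ) (l : ℕ), 1 ≤ l →
      betaM (l + 1) k T x₀ p =
        ((l : ℝ) + 1)⁻¹ * beta l (T ^ k) ((T ^ k) ((Polynomial.aeval T p) x₀))) ∧
    (∀ p : Polynomial ℂ, betaM (m + 1) k T x₀ p = 0) :=
  stmt19_general m k hk T x₀ hT
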